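/- Assume the cross-world factorization: for every m ∈ 𝕄, E[Ŷ(a, m) · 1{M(a') = m} | W = w] = E[Ŷ(a, m) | W = w] · P(M(a') = m | W = w). Then the counterfactual recombination identity holds: E[ω ↦ Ŷ(a, M(a')(ω))(ω) | W = w] = Σ_{m ∈ 𝕄} E[Ŷ(a, m) | W = w] · P(M(a') = m | W = w). (Cross-world recombination step of Theorem 1.) -/

import Mathlib

open MeasureTheory ProbabilityTheory

theorem apply_eq_sum_mul_indicator {Ω ι R : Type*} [Fintype ι] [NonAssocSemiring R]
    (f : ι → Ω → R) (g : Ω → ι) (ω : Ω) :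
    f (g ω) ω = ∑ i, f i ω * {ω | g ω = i}.indicator (fun _ => (1 : R)) ω := by
  classical
  simp only [Set.indicator_apply, Set.mem_ofPred_eq, mul_ite, mul_one, mul_zero,
    Finset.sum_ite_eq, Finset.mem_univ, if_true]

theorem integral_comp_eq_sum_integral_mul_indicator {Ω ι : Type*} [MeasurableSpace Ω]
    [Fintype ι] [MeasurableSpace ι] [MeasurableSingletonClass ι] {μ : Measure Ω}
    {f : ι → Ω → ℝ} {g : Ω → ι} (hf : ∀ i, Integrable (f i) μ) (hg : Measurable g) :
    ∫ ω, f (g ω) ω ∂μ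
      = ∑ i, ∫ ω, f i ω * {ω | g ω = i}.indicator (fun _ => (1 : ℝ)) ω ∂μ := by
  simp_rw [apply_eq_sum_mul_indicator f g]
  refine integral_finsetSum _ fun i _ => ?_
  have h_eq : (fun ω => f i ω * {ω | g ω = i}.indicator (fun _ => (1 : ℝ)) ω)
      = {ω | g ω = i}.indicator (f i) := by
    ext ω
    by_cases h : g ω = i <;> simp [h]
  rw [h_eq]
  exact (hf i).indicator (hg (measurableSet_singleton i))

theorem crossworld_recombination
    {Ω : Type*} [MeasurableSpace Ω] (P : Measure Ω)
    {𝕄 𝕎 : Type*} [Fintype 𝕄] [MeasurableSpace 𝕄] [MeasurableSingletonClass 𝕄]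
    (W : Ω → 𝕎)
    (Ypot : Bool → 𝕄 → Ω → ℝ) (Mpot : Bool → Ω → 𝕄)
    (hYpot_meas : ∀ (α : Bool) (m : 𝕄), Measurable (Ypot α m))
    (hYpot_bdd : ∀ (α : Bool) (m : 𝕄), ∃ C : ℝ, ∀ ω, |Ypot α m ω| ≤ C)
    (hMpot_meas : ∀ α : Bool, Measurable (Mpot α))
    (a a' : Bool) (w : 𝕎)
    (crossWorld : ∀ m : 𝕄,
      ∫ ω, Ypot a m ω * ({ω | Mpot a' ω = m}.indicator (fun _ => (1 : ℝ)) ω)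
          ∂(P[|{ω | W ω = w}])
        = (∫ ω, Ypot a m ω ∂(P[|{ω | W ω = w}]))
            * ((P[|{ω | W ω = w}]) {ω | Mpot a' ω = m}).toReal) :
    ∫ ω, Ypot a (Mpot a' ω) ω ∂(P[|{ω | W ω = w}])
      = ∑ m : 𝕄, (∫ ω, Ypot a m ω ∂(P[|{ω | W ω = w}]))
          * ((P[|{ω | W ω = w}]) {ω | Mpot a' ω = m}).toReal := by
  have h_int : ∀ m, Integrable (Ypot a m) (P[|{ω | W ω = w}]) := fun m => by
    obtain ⟨C, hC⟩ := hYpot_bdd a m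
    exact .of_bound (hYpot_meas a m).aestronglyMeasurable C (ae_of_all _ hC)
  rw [integral_comp_eq_sum_integral_mul_indicator h_int (hMpot_meas a')]
  exact Finset.sum_congr rfl fun m _ => crossWorld m
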